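/- Let η > 0, let I be a finite nonempty index set, and let A_i ⊆ ℝ² (i ∈ I) be finite sets whose union is A = ⋃_{i∈I} A_i; assume moreover that A = ⋃_{i∈I} A_i^∁, where A_i^∁ := A \ A_i. For each i let 𝒞_i be the maximal optimal partition of (A_i^∁, η), and let 𝒞 be the maximal optimal partition of (A, η). Then every cluster C ∈ 𝒞 either is a cluster of some partition 𝒞_i (i.e. C ∈ 𝒞_i for some i ∈ I) or has nonempty intersection with every set A_i (i ∈ I). -/

import Mathlib

noncomputable section

/-- The Euclidean plane. -/
abbrev Plane := EuclideanSpace ℝ (Fin 2)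

/-- Perimeter of a bounded set via Cauchy's formula. -/
noncomputable def perim (C : Set Plane) : ℝ :=
  ∫ θ in (0:ℝ)..(2 * Real.pi),
    sSup ((fun p : Plane => p 0 * Real.cos θ + p 1 * Real.sin θ) '' C)

/-- `P` is a partition of `A` into nonempty clusters. -/
def IsPartition (A : Set Plane) (P : Finset (Set Plane)) : Prop :=
  (∀ C ∈ P, (C : Set Plane).Nonempty) ∧
  (⋃₀ (P : Set (Set Plane)) = A) ∧
  ((P : Set (Set Plane)).PairwiseDisjoint id)

/-- Cost of a partition with opening cost `η` per cluster. -/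
noncomputable def cost (η : ℝ) (P : Finset (Set Plane)) : ℝ :=
  η * P.card + ∑ C ∈ P, perim C

/-- `P` is an optimal partition for `(A, η)`. -/
def IsOptimalPartition (η : ℝ) (A : Set Plane) (P : Finset (Set Plane)) : Prop :=
  IsPartition A P ∧ ∀ Q : Finset (Set Plane), IsPartition A Q → cost η P ≤ cost η Q

/-- `A` is indivisible for `η`: the one-block partition `{A}` is optimal. -/
def Indivisible (η : ℝ) (A : Set Plane) : Prop :=
  IsOptimalPartition η A {A}

/-- A maximal optimal partition of `(A, η)`. -/
def IsMaximalOptimal (η : ℝ) (A : Set Plane) (P : Finset (Set Plane)) : Prop :=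
  IsOptimalPartition η A P ∧
  ¬ ∃ Q : Finset (Set Plane), IsOptimalPartition η A Q ∧ Q.card < P.card ∧
      ∀ C ∈ P, ∃ C' ∈ Q, C ⊆ C'

/-!
A cluster of an optimal partition is indivisible, and an indivisible subset `C` of `A` lies in a
single cluster of every maximal optimal partition of `A`: if `C` met several clusters `K`, then
splitting `C` along them, together with the support-function inequality
`h(⋃ K) + ∑ h(D ∩ C) ≤ h(C) + ∑ h(D)`, would show that merging `K` costs nothing extra.
So if a cluster `C` of `𝒞` misses some `Aᵢ`, it lies in a cluster `D` of `𝒞ᵢ`; in turn `D` lies in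
the cluster of `𝒞` it shares points with, namely `C`, hence `C = D ∈ 𝒞ᵢ`.
-/

section Perimeter

open Finset

/-- `perim S` is, by its definition, the integral of `supportFun S` over `[0, 2π]`. -/
def supportFun (S : Set Plane) (θ : ℝ) : ℝ :=
  sSup ((fun p : Plane => p 0 * Real.cos θ + p 1 * Real.sin θ) '' S)

theorem continuous_supportFun {S : Set Plane} (hS : S.Finite) (hne : S.Nonempty) :
    Continuous (supportFun S) := by
  have hne' : hS.toFinset.Nonempty := by simpa using hne
  have : supportFun S =
      fun θ => hS.toFinset.sup' hne' fun p : Plane => p 0 * Real.cos θ + p 1 * Real.sin θ := by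
    funext θ
    rw [sup'_eq_csSup_image, supportFun, hS.coe_toFinset]
  rw [this]
  exact Continuous.finset_sup'_apply hne' fun p _ => by fun_prop

theorem intervalIntegrable_supportFun {S : Set Plane} (hS : S.Finite) (hne : S.Nonempty)
    (a b : ℝ) : IntervalIntegrable (supportFun S) MeasureTheory.volume a b :=
  (continuous_supportFun hS hne).intervalIntegrable a b

theorem supportFun_mono {S T : Set Plane} (hT : T.Finite) (hS : S.Nonempty) (hST : S ⊆ T)
    (θ : ℝ) : supportFun S θ ≤ supportFun T θ :=
  csSup_le_csSup (hT.image _).bddAbove (hS.image _) (Set.image_mono hST)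

variable {C : Set Plane} {K : Finset (Set Plane)}

/-- The support function of `⋃₀ K` is attained on a single `D₀ ∈ K`; trade `D₀ ∩ C` for `C` there
and `D ∩ C` for `D` everywhere else. -/
theorem supportFun_sUnion_add_sum_inter_le (hC : C.Finite) (hK : ∀ D ∈ K, D.Finite)
    (hKC : ∀ D ∈ K, (D ∩ C).Nonempty) (hKne : K.Nonempty) (θ : ℝ) :
    supportFun (⋃₀ ↑K) θ + ∑ D ∈ K, supportFun (D ∩ C) θ ≤
      supportFun C θ + ∑ D ∈ K, supportFun D θ := by
  set g : Plane → ℝ := fun p => p 0 * Real.cos θ + p 1 * Real.sin θ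
  have hUfin : (⋃₀ (K : Set (Set Plane))).Finite := K.finite_toSet.sUnion hK
  obtain ⟨D₁, hD₁⟩ := hKne
  have hUne : (⋃₀ (K : Set (Set Plane))).Nonempty :=
    ((hKC D₁ hD₁).mono Set.inter_subset_left).mono (Set.subset_sUnion_of_mem hD₁)
  obtain ⟨p, ⟨D₀, hD₀, hp⟩, hgp⟩ := (hUne.image g).csSup_mem (hUfin.image g)
  have hD₀ : D₀ ∈ K := hD₀
  have hU : supportFun (⋃₀ ↑K) θ ≤ supportFun D₀ θ := by
    rw [supportFun, ← hgp]
    exact le_csSup ((hK D₀ hD₀).image g).bddAbove ⟨p, hp, rfl⟩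
  have hC₀ : supportFun (D₀ ∩ C) θ ≤ supportFun C θ :=
    supportFun_mono hC (hKC D₀ hD₀) Set.inter_subset_right θ
  have hrest : ∑ D ∈ K.erase D₀, supportFun (D ∩ C) θ ≤ ∑ D ∈ K.erase D₀, supportFun D θ :=
    sum_le_sum fun D hD => supportFun_mono (hK D (mem_of_mem_erase hD))
      (hKC D (mem_of_mem_erase hD)) Set.inter_subset_left θ
  rw [← add_sum_erase K _ hD₀, ← add_sum_erase K (fun D => supportFun D θ) hD₀]
  linarith

theorem perim_sUnion_add_sum_inter_le (hC : C.Finite) (hK : ∀ D ∈ K, D.Finite)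
    (hKC : ∀ D ∈ K, (D ∩ C).Nonempty) (hKne : K.Nonempty) :
    perim (⋃₀ ↑K) + ∑ D ∈ K, perim (D ∩ C) ≤ perim C + ∑ D ∈ K, perim D := by
  have hKC' : ∀ D ∈ K, (D ∩ C).Finite := fun D hD => (hK D hD).inter_of_left C
  have hKne' : ∀ D ∈ K, D.Nonempty := fun D hD => (hKC D hD).mono Set.inter_subset_left
  obtain ⟨D₁, hD₁⟩ := hKne
  have hCne : C.Nonempty := (hKC D₁ hD₁).mono Set.inter_subset_right
  have hUne : (⋃₀ (K : Set (Set Plane))).Nonempty :=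
    (hKne' D₁ hD₁).mono (Set.subset_sUnion_of_mem hD₁)
  have hU := intervalIntegrable_supportFun (K.finite_toSet.sUnion hK) hUne 0 (2 * Real.pi)
  have hCint := intervalIntegrable_supportFun hC hCne 0 (2 * Real.pi)
  have hsum_inter : IntervalIntegrable (fun θ => ∑ D ∈ K, supportFun (D ∩ C) θ)
      MeasureTheory.volume 0 (2 * Real.pi) :=
    (continuous_finsetSum K fun D hD =>
      continuous_supportFun (hKC' D hD) (hKC D hD)).intervalIntegrable _ _
  have hsum : IntervalIntegrable (fun θ => ∑ D ∈ K, supportFun D θ)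
      MeasureTheory.volume 0 (2 * Real.pi) :=
    (continuous_finsetSum K fun D hD =>
      continuous_supportFun (hK D hD) (hKne' D hD)).intervalIntegrable _ _
  calc perim (⋃₀ ↑K) + ∑ D ∈ K, perim (D ∩ C)
      = ∫ θ in (0 : ℝ)..2 * Real.pi,
          supportFun (⋃₀ ↑K) θ + ∑ D ∈ K, supportFun (D ∩ C) θ := by
        rw [intervalIntegral.integral_add hU hsum_inter, intervalIntegral.integral_finsetSum
          fun D hD => intervalIntegrable_supportFun (hKC' D hD) (hKC D hD) _ _]
        rfl
    _ ≤ ∫ θ in (0 : ℝ)..2 * Real.pi, supportFun C θ + ∑ D ∈ K, supportFun D θ :=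
        intervalIntegral.integral_mono_on (by positivity) (hU.add hsum_inter) (hCint.add hsum)
          fun θ _ => supportFun_sUnion_add_sum_inter_le hC hK hKC ⟨D₁, hD₁⟩ θ
    _ = perim C + ∑ D ∈ K, perim D := by
        rw [intervalIntegral.integral_add hCint hsum, intervalIntegral.integral_finsetSum
          fun D hD => intervalIntegrable_supportFun (hK D hD) (hKne' D hD) _ _]
        rfl

end Perimeter

section Partition

open Finset

variable {η : ℝ} {A C : Set Plane} {P K Q : Finset (Set Plane)}

theorem IsPartition.subset_of_mem (hP : IsPartition A P) {D : Set Plane} (hD : D ∈ P) :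
    D ⊆ A :=
  hP.2.1 ▸ Set.subset_sUnion_of_mem hD

theorem IsPartition.exists_mem (hP : IsPartition A P) {x : Plane} (hx : x ∈ A) :
    ∃ D ∈ P, x ∈ D := by
  rw [← hP.2.1] at hx
  simpa using hx

theorem isPartition_singleton (hC : C.Nonempty) : IsPartition C {C} :=
  ⟨by simpa using hC, by simp, by simp⟩

theorem IsPartition.disjoint_sUnion (hP : IsPartition A P) (hKP : K ⊆ P) {E : Set Plane}
    (hE : E ∈ P) (hEK : E ∉ K) : Disjoint E (⋃₀ ↑K) :=
  Set.disjoint_sUnion_right.2 fun _ hD =>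
    hP.2.2 (mem_coe.2 hE) (mem_coe.2 (hKP hD)) fun h => hEK (h ▸ hD)

theorem IsPartition.disjoint_sdiff (hP : IsPartition A P) (hKP : K ⊆ P)
    (hQ : IsPartition (⋃₀ ↑K) Q) : Disjoint (P \ K) Q := by
  refine disjoint_left.2 fun F hFPK hFQ => ?_
  obtain ⟨hFP, hFK⟩ := mem_sdiff.1 hFPK
  obtain ⟨x, hx⟩ := hQ.1 F hFQ
  exact Set.disjoint_left.1 (hP.disjoint_sUnion hKP hFP hFK) hx (hQ.subset_of_mem hFQ hx)

theorem IsPartition.sdiff_union (hP : IsPartition A P) (hKP : K ⊆ P)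
    (hQ : IsPartition (⋃₀ ↑K) Q) : IsPartition A (P \ K ∪ Q) := by
  refine ⟨fun E hE => ?_, ?_, ?_⟩
  · rcases mem_union.1 hE with hE | hE
    exacts [hP.1 E (mem_sdiff.1 hE).1, hQ.1 E hE]
  · rw [coe_union, Set.sUnion_union, hQ.2.1, ← Set.sUnion_union, ← coe_union,
      sdiff_union_of_subset hKP, hP.2.1]
  · rw [coe_union, Set.pairwiseDisjoint_union]
    refine ⟨hP.2.2.subset (by simp), hQ.2.2, fun E hE F hF _ => ?_⟩
    obtain ⟨hEP, hEK⟩ := mem_sdiff.1 hE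
    exact (hP.disjoint_sUnion hKP hEP hEK).mono_right (hQ.subset_of_mem hF)

theorem cost_union (hPQ : Disjoint P Q) : cost η (P ∪ Q) = cost η P + cost η Q := by
  simp only [cost, card_union_of_disjoint hPQ, sum_union hPQ]
  push_cast
  ring

theorem cost_sdiff_union (hKP : K ⊆ P) (hPQ : Disjoint (P \ K) Q) :
    cost η (P \ K ∪ Q) + cost η K = cost η P + cost η Q := by
  rw [cost_union hPQ, ← sdiff_union_of_subset hKP, cost_union sdiff_disjoint,
    sdiff_union_of_subset hKP]
  ring

theorem IsOptimalPartition.cost_le_of_subset (hP : IsOptimalPartition η A P) (hKP : K ⊆ P)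
    (hQ : IsPartition (⋃₀ ↑K) Q) : cost η K ≤ cost η Q := by
  have := hP.2 _ (hP.1.sdiff_union hKP hQ)
  have := cost_sdiff_union (η := η) hKP (hP.1.disjoint_sdiff hKP hQ)
  linarith

theorem IsOptimalPartition.indivisible_of_mem (hP : IsOptimalPartition η A P) (hC : C ∈ P) :
    Indivisible η C :=
  ⟨isPartition_singleton (hP.1.1 C hC), fun Q hQ =>
    hP.cost_le_of_subset (singleton_subset_iff.2 hC) (by simpa using hQ)⟩

/-- Merging at least two clusters of a maximal optimal partition strictly increases the cost:
otherwise the merged partition would be optimal, coarser and have fewer clusters. -/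
theorem IsMaximalOptimal.cost_lt_cost_merge (hP : IsMaximalOptimal η A P) (hKP : K ⊆ P)
    (hK : 2 ≤ K.card) : cost η K < cost η {⋃₀ ↑K} := by
  by_contra! hle
  obtain ⟨D, hD⟩ := card_pos.1 (by omega : 0 < K.card)
  have hU : IsPartition (⋃₀ ↑K) {⋃₀ ↑K} :=
    isPartition_singleton ((hP.1.1.1 D (hKP hD)).mono (Set.subset_sUnion_of_mem hD))
  have hcost := cost_sdiff_union (η := η) hKP (hP.1.1.disjoint_sdiff hKP hU)
  refine hP.2 ⟨P \ K ∪ {⋃₀ ↑K}, ⟨hP.1.1.sdiff_union hKP hU, fun R hR => ?_⟩, ?_, ?_⟩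
  · linarith [hP.1.2 R hR]
  · have := card_sdiff_add_card_eq_card hKP
    have := card_union_le (P \ K) {⋃₀ ↑K}
    rw [card_singleton] at this
    omega
  · intro E hE
    by_cases hEK : E ∈ K
    · exact ⟨_, mem_union_right _ (mem_singleton_self _), Set.subset_sUnion_of_mem hEK⟩
    · exact ⟨E, mem_union_left _ (mem_sdiff.2 ⟨hE, hEK⟩), subset_rfl⟩

end Partition

section Absorption

open Finset

variable {η : ℝ} {A C : Set Plane} {P : Finset (Set Plane)}

open scoped Classical in
def meeting (P : Finset (Set Plane)) (C : Set Plane) : Finset (Set Plane) :=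
  P.filter fun D => (D ∩ C).Nonempty

theorem mem_meeting {D : Set Plane} : D ∈ meeting P C ↔ D ∈ P ∧ (D ∩ C).Nonempty := by
  classical exact mem_filter

theorem meeting_subset : meeting P C ⊆ P := by
  classical exact filter_subset _ P

theorem IsPartition.injOn_inter (hP : IsPartition A P) :
    Set.InjOn (· ∩ C) ↑(meeting P C) := by
  intro D hD E hE hDE
  by_contra hne
  obtain ⟨x, hx⟩ := (mem_meeting.1 hD).2
  have hDE : D ∩ C = E ∩ C := hDE
  have hxE : x ∈ E ∩ C := hDE ▸ hx
  exact Set.disjoint_left.1 (hP.2.2 (mem_meeting.1 hD).1 (mem_meeting.1 hE).1 hne) hx.1 hxE.1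

theorem IsPartition.restrict (hP : IsPartition A P) (hCA : C ⊆ A) :
    IsPartition C ((meeting P C).image (· ∩ C)) := by
  refine ⟨?_, ?_, ?_⟩
  · simp only [mem_image]
    rintro _ ⟨D, hD, rfl⟩
    exact (mem_meeting.1 hD).2
  · refine (Set.sUnion_subset ?_).antisymm fun x hx => ?_
    · simp only [coe_image, Set.mem_image]
      rintro _ ⟨D, _, rfl⟩
      exact Set.inter_subset_right
    · obtain ⟨D, hD, hxD⟩ := hP.exists_mem (hCA hx)
      exact Set.mem_sUnion.2 ⟨D ∩ C, mem_coe.2 (mem_image_of_mem _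
        (mem_meeting.2 ⟨hD, x, hxD, hx⟩)), hxD, hx⟩
  · simp only [coe_image]
    rintro _ ⟨D, hD, rfl⟩ _ ⟨E, hE, rfl⟩ hDE
    exact (hP.2.2 (mem_meeting.1 hD).1 (mem_meeting.1 hE).1 fun h => hDE (h ▸ rfl)).mono
      Set.inter_subset_left Set.inter_subset_left

theorem IsPartition.cost_restrict (hP : IsPartition A P) :
    cost η ((meeting P C).image (· ∩ C)) =
      η * (meeting P C).card + ∑ D ∈ meeting P C, perim (D ∩ C) := by
  rw [cost, card_image_of_injOn hP.injOn_inter, sum_image hP.injOn_inter]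

theorem IsMaximalOptimal.eq_of_inter_nonempty (hP : IsMaximalOptimal η A P) (hA : A.Finite)
    (hCA : C ⊆ A) (hC : Indivisible η C) {D E : Set Plane} (hD : D ∈ P) (hE : E ∈ P)
    (hDC : (D ∩ C).Nonempty) (hEC : (E ∩ C).Nonempty) : D = E := by
  by_contra hDE
  have hD' : D ∈ meeting P C := mem_meeting.2 ⟨hD, hDC⟩
  have hK : 2 ≤ (meeting P C).card :=
    one_lt_card.2 ⟨D, hD', E, mem_meeting.2 ⟨hE, hEC⟩, hDE⟩
  have hfin : ∀ F ∈ meeting P C, F.Finite := fun F hF =>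
    hA.subset (hP.1.1.subset_of_mem (mem_meeting.1 hF).1)
  have hindiv := hC.2 _ (hP.1.1.restrict hCA)
  have hperim := perim_sUnion_add_sum_inter_le (hA.subset hCA) hfin
    (fun F hF => (mem_meeting.1 hF).2) ⟨D, hD'⟩
  have hmerge := hP.cost_lt_cost_merge meeting_subset hK
  rw [hP.1.1.cost_restrict] at hindiv
  simp only [cost, card_singleton, sum_singleton, Nat.cast_one] at hindiv hmerge
  linarith

theorem IsMaximalOptimal.subset_of_inter_nonempty (hP : IsMaximalOptimal η A P)
    (hA : A.Finite) (hCA : C ⊆ A) (hC : Indivisible η C) {E : Set Plane} (hE : E ∈ P)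
    (hEC : (E ∩ C).Nonempty) : C ⊆ E := by
  intro x hx
  obtain ⟨D, hD, hxD⟩ := hP.1.1.exists_mem (hCA hx)
  exact hP.eq_of_inter_nonempty hA hCA hC hD hE ⟨x, hxD, hx⟩ hEC ▸ hxD

end Absorption

theorem big_cluster_property_dichotomy_general
    (η : ℝ)
    (ι : Type) [Fintype ι]
    (A : ι → Set Plane) (hfin : ∀ i, (A i).Finite)
    (Atot : Set Plane) (hAtot : Atot = ⋃ i, A i)
    (𝒞 : ι → Finset (Set Plane))
    (h𝒞 : ∀ i, IsMaximalOptimal η (Atot \ A i) (𝒞 i))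
    (𝒞tot : Finset (Set Plane)) (h𝒞tot : IsMaximalOptimal η Atot 𝒞tot) :
    ∀ C ∈ 𝒞tot, (∃ i : ι, C ∈ 𝒞 i) ∨ (∀ i : ι, (C ∩ A i).Nonempty) := by
  intro C hC
  refine or_iff_not_imp_right.2 fun hmiss => ?_
  obtain ⟨i, hi⟩ := not_forall.1 hmiss
  have hAfin : Atot.Finite := hAtot ▸ Set.finite_iUnion hfin
  have hCA : C ⊆ Atot := h𝒞tot.1.1.subset_of_mem hC
  have hCB : C ⊆ Atot \ A i := fun x hx => ⟨hCA hx, fun hxi => hi ⟨x, hx, hxi⟩⟩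
  obtain ⟨x, hx⟩ := h𝒞tot.1.1.1 C hC
  obtain ⟨D, hD, hxD⟩ := (h𝒞 i).1.1.exists_mem (hCB hx)
  have hDA : D ⊆ Atot := ((h𝒞 i).1.1.subset_of_mem hD).trans Set.sdiff_subset
  have hCD : C ⊆ D := (h𝒞 i).subset_of_inter_nonempty hAfin.sdiff hCB
    (h𝒞tot.1.indivisible_of_mem hC) hD ⟨x, hxD, hx⟩
  have hDC : D ⊆ C := h𝒞tot.subset_of_inter_nonempty hAfin hDA
    ((h𝒞 i).1.indivisible_of_mem hD) hC ⟨x, hx, hxD⟩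
  exact ⟨i, hCD.antisymm hDC ▸ hD⟩

/-- second part of Lemma 5: every cluster of the maximal optimal
partition of `A` is either a cluster of some `𝒞ᵢ` or intersects every `Aᵢ`. -/
theorem big_cluster_property_dichotomy
    (η : ℝ) (hη : 0 < η)
    (ι : Type) [Fintype ι] [Nonempty ι]
    (A : ι → Set Plane) (hfin : ∀ i, (A i).Finite)
    (Atot : Set Plane) (hAtot : Atot = ⋃ i, A i)
    (hcompl : Atot = ⋃ i, Atot \ A i)
    (𝒞 : ι → Finset (Set Plane))
    (h𝒞 : ∀ i, IsMaximalOptimal η (Atot \ A i) (𝒞 i))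
    (𝒞tot : Finset (Set Plane)) (h𝒞tot : IsMaximalOptimal η Atot 𝒞tot) :
    ∀ C ∈ 𝒞tot, (∃ i : ι, C ∈ 𝒞 i) ∨ (∀ i : ι, (C ∩ A i).Nonempty) :=
  big_cluster_property_dichotomy_general η ι A hfin Atot hAtot 𝒞 h𝒞 𝒞tot h𝒞tot

end
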